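/- Let n ≥ 1, let 0 ≤ k ≤ n−1, and set l := max{k, n−k−1}. For every i with 0 ≤ i ≤ l: applying bitwise complementation to both endpoints of every edge of the i-lexical matching M^i_{n,k} yields exactly the matching M^{l−i}_{n,n−k−1}; applying string reversal to both endpoints of every edge of M^i_{n,k} yields exactly the matching M^{l−i}_{n,k}; consequently, applying complementation followed by reversal to both endpoints of every edge of M^i_{n,k} yields exactly the matching M^i_{n,n−k−1}. -/

import Mathlib

/-!
Read `x^↑` as a ±1 walk. An edge of `M^i_{n,k}` flips the 0-bit of `x` at a down-step `d`, and
`i` counts the down-steps preceding `d` in the lexical order. As `x^↑` has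
`max n (2k+1) - k = l + 1` down-steps, it suffices to see that the image edge flips a down-step
followed, in the lexical order, by exactly `i` down-steps: its index is then `l - i`.

Reversal reflects the walk, and carries the down-steps preceding `d` to those following the
mirrored step. After complementation the walk is the negated walk of `x` (lowered by 2 beyond
`d`), so the down-steps following `d` are up-steps of `x`; on either side of `d` their number
equals that of the down-steps of `x` preceding `d`, by the balance of downward and upward
crossings of a level. The appended down-steps are counted in closed form, and the third symmetry
is the composite of the first two.
-/

/-- The Hamming weight of a bitstring of length `n`, i.e., its number of 1-bits. -/
def wt {n : ℕ} (x : Fin n → Bool) : ℕ := (Finset.univ.filter fun i => x i = true).card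

/-- The `n`-dimensional hypercube: vertices are bitstrings of length `n`, two of which are
adjacent iff they differ in exactly one position. -/
def cube (n : ℕ) : SimpleGraph (Fin n → Bool) where
  Adj x y := hammingDist x y = 1
  symm := ⟨fun x y (h : hammingDist x y = 1) => (hammingDist_comm y x).trans h⟩
  loopless := ⟨fun x (h : hammingDist x x = 1) => by simp [hammingDist_self] at h⟩
/-- The number of 1-bits among the first `j` bits of `x` (interpreting a bitstring as a
lattice path, this determines the height after `j` steps). -/
def onesUpTo {n : ℕ} (x : Fin n → Bool) (j : ℕ) : ℕ :=
  (Finset.univ.filter fun i : Fin n => i.val < j ∧ x i = true).card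

/-- The height of the lattice path of `x` after `j` steps: number of 1s minus number of 0s
among the first `j` bits (appended steps beyond the length of `x` being down-steps). -/
def hgt {n : ℕ} (x : Fin n → Bool) (j : ℕ) : ℤ := 2 * (onesUpTo x j : ℤ) - (j : ℤ)

/-- The length of the extended lattice path `x^↑`: if the final height `2·wt x − n` is `≥ −1`,
down-steps are appended until the path ends at height `−1` (total length `2·wt x + 1`);
otherwise nothing is appended. -/
def extLen {n : ℕ} (x : Fin n → Bool) : ℕ := max n (2 * wt x + 1)

/-- Position `j` (0-indexed) of the extended path `x^↑` is a down-step: either it is a 0-bit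
of `x`, or one of the appended down-steps. -/
def isDownStep {n : ℕ} (x : Fin n → Bool) (j : ℕ) : Prop :=
  j < extLen x ∧ ∀ h : j < n, x ⟨j, h⟩ = false

/-- The `i`-lexical matching `M^i_{n,k}` between levels `k` and `k+1` of the `n`-cube, as a
relation: `lexUp n k i x y` holds iff `x` lies in level `k` and `y = M^{i,↑}_{n,k}(x)`, i.e.,
`y` is obtained from `x` by flipping to 1 the 0-bit at the `i`-th down-step of `x^↑` in the
order of decreasing starting height, ties broken from right to left, counting from 0,
provided this down-step lies within `x`. -/
def lexUp (n k i : ℕ) (x y : Fin n → Bool) : Prop :=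
  wt x = k ∧ ∃ d : ℕ, d < n ∧ isDownStep x d ∧
    ({j : ℕ | isDownStep x j ∧ (hgt x d < hgt x j ∨ (hgt x j = hgt x d ∧ d < j))}).ncard = i ∧
    y = fun t : Fin n => if t.val = d then true else x t
/-- Bitwise complementation of a bitstring. -/
def bcomp {n : ℕ} (x : Fin n → Bool) : Fin n → Bool := fun i => !(x i)

/-- Reversal of a bitstring. -/
def brev {n : ℕ} (x : Fin n → Bool) : Fin n → Bool := fun i => x i.rev

open Finset

def IsLatticePath (f : ℕ → ℤ) : Prop := ∀ j, f (j + 1) = f j + 1 ∨ f (j + 1) = f j - 1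

/-- With `f = hgt x` and `L = extLen x`: the down-steps of `x^↑` that come before the one at `d`
in the order defining `M^i_{n,k}`, so that `lexUp` asks for `i` of them. -/
def precedingDownSteps (f : ℕ → ℤ) (L d : ℕ) : Finset ℕ :=
  {j ∈ range L | f (j + 1) < f j ∧ (f d < f j ∨ f j = f d ∧ d < j)}

def followingDownSteps (f : ℕ → ℤ) (L d : ℕ) : Finset ℕ :=
  {j ∈ range L | f (j + 1) < f j ∧ (f j < f d ∨ f j = f d ∧ j < d)}

section LatticePath

variable {f g : ℕ → ℤ} {a b d m L : ℕ}

theorem IsLatticePath.card_downSteps_add_eq_card_upSteps_add (hf : IsLatticePath f) (s : ℤ)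
    (hab : a ≤ b) :
    #{j ∈ Ico a b | f (j + 1) < f j ∧ s ≤ f j} + (f b - s + 1).toNat =
      #{j ∈ Ico a b | f j < f (j + 1) ∧ s ≤ f j + 1} + (f a - s + 1).toNat := by
  -- For each `t ≥ s`, the edge between the heights `t - 1` and `t` is crossed downwards
  -- `[t ≤ f a] - [t ≤ f b]` times more often than upwards.
  induction b, hab using Nat.le_induction with
  | base => simp
  | succ b hab ih =>
    rw [Nat.Ico_succ_right_eq_insert_Ico hab, filter_insert, filter_insert]
    have hb : ∀ p : ℕ → Prop, ∀ _ : DecidablePred p, b ∉ {j ∈ Ico a b | p j} := by simp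
    rcases hf b with h | h <;> split_ifs <;> (try rw [card_insert_of_notMem (hb _ _)]) <;> omega

theorem card_downSteps_le_eq_card_upSteps_of_add_eq {c s t : ℤ}
    (hfg : ∀ j, a ≤ j → j ≤ b → f j + g j = c) (hst : s + t = c + 1) :
    #{j ∈ Ico a b | g (j + 1) < g j ∧ g j ≤ t} =
      #{j ∈ Ico a b | f j < f (j + 1) ∧ s ≤ f j + 1} := by
  refine congrArg card (filter_congr fun j hj => ?_)
  rw [mem_Ico] at hj
  have := hfg j hj.1 hj.2.le
  have := hfg (j + 1) (by omega) hj.2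
  omega

theorem IsLatticePath.card_downSteps_eq_of_add_reflect (hf : IsLatticePath f) {c s t : ℤ}
    (hfg : ∀ j ≤ m, f j + g (m - j) = c) (hbm : b ≤ m) (hst : s + t = c + 1) :
    #{j ∈ Ico a b | f (j + 1) < f j ∧ s ≤ f j} =
      #{j ∈ Ico (m - b) (m - a) | g (j + 1) < g j ∧ g j ≤ t} := by
  refine card_nbij' (fun j => m - 1 - j) (fun j => m - 1 - j) ?_ ?_ ?_ ?_
  · intro j hj
    simp only [mem_coe, mem_filter, mem_Ico] at hj ⊢
    have h₁ := hfg j (by omega)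
    have h₂ := hfg (j + 1) (by omega)
    rw [show m - j = m - 1 - j + 1 by omega] at h₁
    rw [show m - (j + 1) = m - 1 - j by omega] at h₂
    have := hf j
    omega
  · intro j hj
    simp only [mem_coe, mem_filter, mem_Ico] at hj ⊢
    have h₁ := hfg (m - j) (by omega)
    have h₂ := hfg (m - 1 - j) (by omega)
    rw [show m - (m - j) = j by omega, show m - j = m - 1 - j + 1 by omega] at h₁
    rw [show m - (m - 1 - j) = j + 1 by omega] at h₂
    have := hf (m - 1 - j)
    omega
  all_goals
    intro j hj
    simp only [mem_coe, mem_filter, mem_Ico] at hj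
    dsimp only
    omega

theorem card_downSteps_le_of_eq_sub {c : ℤ} (hf : ∀ j, a ≤ j → f j = c - j) (t : ℤ) :
    #{j ∈ Ico a b | f (j + 1) < f j ∧ f j ≤ t} = b - max a (c - t).toNat := by
  rw [← Nat.card_Ico, ← Ico_filter_le]
  refine congrArg card (filter_congr fun j hj => ?_)
  rw [mem_Ico] at hj
  have := hf j hj.1
  have := hf (j + 1) (by omega)
  omega

theorem card_downSteps_ge_of_eq_sub {c : ℤ} (hf : ∀ j, a ≤ j → f j = c - j) (s : ℤ) :
    #{j ∈ Ico a b | f (j + 1) < f j ∧ s ≤ f j} = min b (c - s + 1).toNat - a := by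
  rw [← Nat.card_Ico, ← Ico_filter_lt]
  refine congrArg card (filter_congr fun j hj => ?_)
  rw [mem_Ico] at hj
  have := hf j hj.1
  have := hf (j + 1) (by omega)
  omega

theorem card_precedingDownSteps_add_card_followingDownSteps (hdL : d < L)
    (hd : f (d + 1) < f d) :
    #(precedingDownSteps f L d) + #(followingDownSteps f L d) + 1 =
      #{j ∈ range L | f (j + 1) < f j} := by
  have hsplit : {j ∈ range L | f (j + 1) < f j} =
      insert d (precedingDownSteps f L d ∪ followingDownSteps f L d) := by
    ext j
    simp only [precedingDownSteps, followingDownSteps, mem_insert, mem_union, mem_filter,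
      mem_range]
    constructor
    · rintro ⟨hj, hjd⟩
      omega
    · rintro (rfl | ⟨hj, hjd, -⟩ | ⟨hj, hjd, -⟩) <;> omega
  rw [hsplit, card_insert_of_notMem, card_union_of_disjoint, add_comm]
  · exact disjoint_filter.2 fun j _ h₁ h₂ => by omega
  · simp [precedingDownSteps, followingDownSteps]

theorem card_filter_range_eq_add_of_not {p : ℕ → Prop} [DecidablePred p] (hdm : d < m)
    (hmL : m ≤ L) (hpd : ¬ p d) :
    #{j ∈ range L | p j} =
      #{j ∈ Ico 0 d | p j} + #{j ∈ Ico (d + 1) m | p j} + #{j ∈ Ico m L | p j} := by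
  simp only [card_filter, range_eq_Ico]
  rw [← sum_Ico_consecutive _ (Nat.zero_le d) (hdm.le.trans hmL),
    sum_eq_sum_Ico_succ_bot (hdm.trans_le hmL), ← sum_Ico_consecutive _ hdm hmL, if_neg hpd]
  ring

theorem card_precedingDownSteps_eq_add (hdm : d < m) (hmL : m ≤ L) :
    #(precedingDownSteps f L d) =
      #{j ∈ Ico 0 d | f (j + 1) < f j ∧ f d + 1 ≤ f j} +
      #{j ∈ Ico (d + 1) m | f (j + 1) < f j ∧ f d ≤ f j} +
      #{j ∈ Ico m L | f (j + 1) < f j ∧ f d ≤ f j} := by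
  refine (card_filter_range_eq_add_of_not hdm hmL ?not_d).trans ?_
  case not_d => omega
  refine congrArg₂ (· + ·) (congrArg₂ (· + ·) ?_ ?_) ?_ <;>
    exact congrArg card (filter_congr fun j hj => by rw [mem_Ico] at hj; omega)

theorem card_followingDownSteps_eq_add (hdm : d < m) (hmL : m ≤ L) :
    #(followingDownSteps f L d) =
      #{j ∈ Ico 0 d | f (j + 1) < f j ∧ f j ≤ f d} +
      #{j ∈ Ico (d + 1) m | f (j + 1) < f j ∧ f j ≤ f d - 1} +
      #{j ∈ Ico m L | f (j + 1) < f j ∧ f j ≤ f d - 1} := by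
  refine (card_filter_range_eq_add_of_not hdm hmL ?not_d).trans ?_
  case not_d => omega
  refine congrArg₂ (· + ·) (congrArg₂ (· + ·) ?_ ?_) ?_ <;>
    exact congrArg card (filter_congr fun j hj => by rw [mem_Ico] at hj; omega)

end LatticePath

/-- Positions `j ≥ n` read as 0-bits: the down-steps appended in `x^↑`. -/
def bitAt {n : ℕ} (x : Fin n → Bool) (j : ℕ) : Bool :=
  if h : j < n then x ⟨j, h⟩ else false

def setBit {n : ℕ} (x : Fin n → Bool) (d : ℕ) : Fin n → Bool :=
  fun t => if t.val = d then true else x t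

section Bitstring

variable {n : ℕ} {x : Fin n → Bool} {d j : ℕ}

theorem onesUpTo_eq_card (x : Fin n → Bool) (j : ℕ) :
    onesUpTo x j = #{i ∈ range j | bitAt x i} := by
  rw [onesUpTo, ← card_map Fin.valEmbedding]
  congr 1
  ext i
  simp only [mem_map, mem_filter, mem_univ, true_and, Fin.valEmbedding_apply, mem_range]
  constructor
  · rintro ⟨i, ⟨hij, hi⟩, rfl⟩
    simp [bitAt, hij, hi]
  · rintro ⟨hij, hi⟩
    rw [bitAt] at hi
    split_ifs at hi with h
    exact ⟨⟨i, h⟩, ⟨hij, hi⟩, rfl⟩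

theorem onesUpTo_of_le (x : Fin n → Bool) (hj : n ≤ j) : onesUpTo x j = wt x :=
  congrArg card (filter_congr fun i _ => ⟨And.right, fun hi => ⟨by omega, hi⟩⟩)

theorem hgt_zero (x : Fin n → Bool) : hgt x 0 = 0 := by
  simp [hgt, onesUpTo]

theorem hgt_succ (x : Fin n → Bool) (j : ℕ) :
    hgt x (j + 1) = hgt x j + if bitAt x j then 1 else -1 := by
  simp only [hgt, onesUpTo_eq_card, range_add_one, filter_insert]
  split_ifs with h
  · rw [card_insert_of_notMem (by simp)]
    push_cast
    ring
  · push_cast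
    ring

theorem isLatticePath_hgt (x : Fin n → Bool) : IsLatticePath (hgt x) := fun j => by
  rw [hgt_succ]
  split_ifs <;> omega

theorem hgt_succ_lt_iff : hgt x (j + 1) < hgt x j ↔ bitAt x j = false := by
  rw [hgt_succ]
  cases bitAt x j <;> simp

theorem hgt_succ_of_bitAt_eq_false (h : bitAt x j = false) : hgt x (j + 1) = hgt x j - 1 := by
  rw [hgt_succ, h]
  rfl

theorem hgt_of_le (x : Fin n → Bool) (hj : n ≤ j) : hgt x j = 2 * wt x - j := by
  rw [hgt, onesUpTo_of_le x hj]

theorem le_extLen (x : Fin n → Bool) : n ≤ extLen x := le_max_left _ _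

theorem bitAt_setBit (hd : d < n) :
    bitAt (setBit x d) j = (decide (j = d) || bitAt x j) := by
  by_cases hj : j < n <;> by_cases hjd : j = d <;> simp [bitAt, setBit, hj, hjd] <;> omega

theorem hgt_setBit (hd : d < n) (hxd : bitAt x d = false) (j : ℕ) :
    hgt (setBit x d) j = hgt x j + if d < j then 2 else 0 := by
  induction j with
  | zero => simp [hgt_zero]
  | succ j ih =>
    rw [hgt_succ, hgt_succ x, ih, bitAt_setBit hd]
    by_cases hjd : j = d
    · subst hjd
      simp only [hxd, decide_true, Bool.true_or, Bool.false_eq_true, lt_self_iff_false,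
        lt_add_one, ↓reduceIte]
      ring
    · simp only [hjd, decide_false, Bool.false_or]
      split_ifs <;> omega

theorem wt_setBit (hd : d < n) (hxd : bitAt x d = false) : wt (setBit x d) = wt x + 1 := by
  have h := hgt_setBit hd hxd n
  rw [hgt_of_le _ le_rfl, hgt_of_le _ le_rfl, if_pos hd] at h
  omega

theorem bitAt_bcomp (z : Fin n → Bool) (hj : j < n) : bitAt (bcomp z) j = !bitAt z j := by
  simp [bitAt, bcomp, hj]

theorem hgt_bcomp (z : Fin n → Bool) (hj : j ≤ n) : hgt (bcomp z) j = -hgt z j := by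
  induction j with
  | zero => simp [hgt_zero]
  | succ j ih =>
    rw [hgt_succ, hgt_succ z, ih (by omega), bitAt_bcomp z (by omega)]
    cases bitAt z j <;>
      simp only [Bool.not_false, Bool.not_true, Bool.false_eq_true, ↓reduceIte] <;> ring

theorem wt_bcomp_add (z : Fin n → Bool) : wt (bcomp z) + wt z = n := by
  have h := hgt_bcomp z le_rfl
  rw [hgt_of_le _ le_rfl, hgt_of_le _ le_rfl] at h
  omega

theorem bitAt_brev (x : Fin n → Bool) (hj : j < n) :
    bitAt (brev x) j = bitAt x (n - 1 - j) := by
  simp only [bitAt, brev, hj, dif_pos, show n - 1 - j < n by omega]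
  congr 1
  ext
  simp only [Fin.val_rev]
  omega

theorem hgt_brev_add (x : Fin n → Bool) (hj : j ≤ n) :
    hgt (brev x) j + hgt x (n - j) = hgt x n := by
  induction j with
  | zero => simp [hgt_zero]
  | succ j ih =>
    have h := hgt_succ x (n - 1 - j)
    rw [show n - 1 - j + 1 = n - j by omega] at h
    rw [hgt_succ, bitAt_brev x (by omega), show n - (j + 1) = n - 1 - j by omega,
      ← ih (by omega), h]
    ring

theorem wt_brev (x : Fin n → Bool) : wt (brev x) = wt x := by
  have h := hgt_brev_add x le_rfl
  rw [Nat.sub_self, hgt_zero, hgt_of_le _ le_rfl, hgt_of_le _ le_rfl] at h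
  omega

theorem extLen_brev (x : Fin n → Bool) : extLen (brev x) = extLen x := by
  rw [extLen, extLen, wt_brev]

theorem card_downSteps_hgt_add_wt (x : Fin n → Bool) :
    #{j ∈ range (extLen x) | hgt x (j + 1) < hgt x j} + wt x = extLen x := by
  rw [← onesUpTo_of_le x (le_extLen x), onesUpTo_eq_card]
  simp only [hgt_succ_lt_iff, ← Bool.not_eq_true]
  rw [add_comm, card_filter_add_card_filter_not, card_range]

end Bitstring

section LexicalMatching

variable {n k i d : ℕ} {x y : Fin n → Bool}

theorem lexUp_iff :
    lexUp n k i x y ↔ wt x = k ∧ ∃ d < n, bitAt x d = false ∧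
      #(precedingDownSteps (hgt x) (extLen x) d) = i ∧ y = setBit x d := by
  have hdown : ∀ j, isDownStep x j ↔ j < extLen x ∧ hgt x (j + 1) < hgt x j := fun j => by
    rw [isDownStep, hgt_succ_lt_iff, bitAt]
    by_cases hj : j < n <;> simp [hj]
  have hset : ∀ d, {j | isDownStep x j ∧ (hgt x d < hgt x j ∨ hgt x j = hgt x d ∧ d < j)} =
      ↑(precedingDownSteps (hgt x) (extLen x) d) := fun d => by
    ext j
    simp only [hdown, precedingDownSteps, coe_filter, mem_range, Set.mem_ofPred_eq, and_assoc]
  simp only [lexUp, hset, Set.ncard_coe_finset]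
  simp only [hdown, hgt_succ_lt_iff]
  refine and_congr_right fun _ => exists_congr fun d => and_congr_right fun hd => ?_
  rw [and_iff_right (hd.trans_le (le_extLen x))]
  rfl

theorem card_followingDownSteps_bcomp_setBit (hd : d < n) (hxd : bitAt x d = false) :
    #(followingDownSteps (hgt (bcomp (setBit x d))) (extLen (bcomp (setBit x d))) d) =
      #(precedingDownSteps (hgt x) (extLen x) d) := by
  have hP := isLatticePath_hgt x
  have hQ : ∀ j ≤ n, hgt (bcomp (setBit x d)) j = -hgt x j - if d < j then 2 else 0 := by
    intro j hj
    rw [hgt_bcomp _ hj, hgt_setBit hd hxd]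
    ring
  have hPQ₁ : ∀ j, 0 ≤ j → j ≤ d → hgt x j + hgt (bcomp (setBit x d)) j = 0 := by
    intro j _ hj
    rw [hQ j (by omega), if_neg (by omega)]
    ring
  have hPQ₂ : ∀ j, d + 1 ≤ j → j ≤ n → hgt x j + hgt (bcomp (setBit x d)) j = -2 := by
    intro j hj hjn
    rw [hQ j hjn, if_pos (by omega)]
    ring
  have hQd : hgt (bcomp (setBit x d)) d = -hgt x d := by
    linarith [hPQ₁ d (Nat.zero_le d) le_rfl]
  have hw := wt_bcomp_add (setBit x d)
  rw [wt_setBit hd hxd] at hw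
  rw [card_followingDownSteps_eq_add hd (le_extLen _),
    card_precedingDownSteps_eq_add hd (le_extLen _), hQd,
    card_downSteps_le_eq_card_upSteps_of_add_eq hPQ₁ (s := hgt x d + 1) (by ring),
    card_downSteps_le_eq_card_upSteps_of_add_eq hPQ₂ (s := hgt x d) (by ring),
    card_downSteps_le_of_eq_sub (fun _ => hgt_of_le _),
    card_downSteps_ge_of_eq_sub (fun _ => hgt_of_le _)]
  have below := hP.card_downSteps_add_eq_card_upSteps_add (hgt x d + 1) (Nat.zero_le d)
  have above := hP.card_downSteps_add_eq_card_upSteps_add (hgt x d) (a := d + 1) hd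
  rw [hgt_zero] at below
  rw [hgt_succ_of_bitAt_eq_false hxd, hgt_of_le x le_rfl] at above
  simp only [extLen]
  omega

theorem card_followingDownSteps_brev (hd : d < n) (hxd : bitAt x d = false) :
    #(followingDownSteps (hgt (brev x)) (extLen (brev x)) (n - 1 - d)) =
      #(precedingDownSteps (hgt x) (extLen x) d) := by
  have hP := isLatticePath_hgt x
  have hPP' : ∀ j ≤ n, hgt x j + hgt (brev x) (n - j) = hgt x n := fun j hj => by
    simpa [Nat.sub_sub_self hj, add_comm] using hgt_brev_add x (Nat.sub_le n j)
  have hPd' : hgt (brev x) (n - 1 - d) = hgt x n - hgt x d + 1 := by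
    have h := hPP' (d + 1) hd
    rw [hgt_succ_of_bitAt_eq_false hxd, show n - (d + 1) = n - 1 - d by omega] at h
    omega
  rw [card_followingDownSteps_eq_add (by omega) (le_extLen _),
    card_precedingDownSteps_eq_add hd (le_extLen _), hPd', extLen_brev,
    card_downSteps_le_of_eq_sub (fun _ => hgt_of_le _),
    card_downSteps_ge_of_eq_sub (fun _ => hgt_of_le _),
    hP.card_downSteps_eq_of_add_reflect hPP' hd.le (s := hgt x d + 1)
      (t := hgt x n - hgt x d + 1 - 1) (by ring),
    hP.card_downSteps_eq_of_add_reflect hPP' le_rfl (s := hgt x d)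
      (t := hgt x n - hgt x d + 1) (by ring),
    Nat.sub_zero, Nat.sub_self, show n - (d + 1) = n - 1 - d by omega,
    show n - d = n - 1 - d + 1 by omega, wt_brev, hgt_of_le x le_rfl]
  simp only [extLen]
  omega

theorem setBit_bcomp_setBit (hxd : bitAt x d = false) :
    setBit (bcomp (setBit x d)) d = bcomp x := by
  funext t
  by_cases htd : t.val = d
  · have : x t = false := by simpa [bitAt, ← htd] using hxd
    simp [setBit, bcomp, htd, this]
  · simp [setBit, bcomp, htd]

theorem brev_setBit (hd : d < n) : brev (setBit x d) = setBit (brev x) (n - 1 - d) := by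
  funext t
  simp only [brev, setBit, Fin.val_rev]
  congr 1
  simp only [eq_iff_iff]
  omega

theorem lexUp.bcomp (h : lexUp n k i x y) :
    lexUp n (n - k - 1) (max k (n - k - 1) - i) (bcomp y) (bcomp x) := by
  obtain ⟨rfl, d, hd, hxd, rfl, rfl⟩ := lexUp_iff.1 h
  have hzd : bitAt (bcomp (setBit x d)) d = false := by
    rw [bitAt_bcomp _ hd, bitAt_setBit hd]
    simp
  have hpart := card_precedingDownSteps_add_card_followingDownSteps
    (hd.trans_le (le_extLen (bcomp (setBit x d)))) (hgt_succ_lt_iff.2 hzd)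
  have htotal := card_downSteps_hgt_add_wt (bcomp (setBit x d))
  have hkey := card_followingDownSteps_bcomp_setBit hd hxd
  have hw := wt_bcomp_add (setBit x d)
  rw [wt_setBit hd hxd] at hw
  refine lexUp_iff.2 ⟨by omega, d, hd, hzd, ?_, (setBit_bcomp_setBit hxd).symm⟩
  simp only [extLen] at hpart htotal hkey ⊢
  omega

theorem lexUp.brev (h : lexUp n k i x y) :
    lexUp n k (max k (n - k - 1) - i) (brev x) (brev y) := by
  obtain ⟨rfl, d, hd, hxd, rfl, rfl⟩ := lexUp_iff.1 h
  have hxd' : bitAt (brev x) (n - 1 - d) = false := by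
    rw [bitAt_brev x (by omega), show n - 1 - (n - 1 - d) = d by omega, hxd]
  have hpart := card_precedingDownSteps_add_card_followingDownSteps
    ((show n - 1 - d < n by omega).trans_le (le_extLen (brev x))) (hgt_succ_lt_iff.2 hxd')
  have htotal := card_downSteps_hgt_add_wt (brev x)
  have hkey := card_followingDownSteps_brev hd hxd
  refine lexUp_iff.2 ⟨wt_brev x, n - 1 - d, by omega, hxd', ?_, brev_setBit hd⟩
  rw [extLen_brev, wt_brev] at *
  simp only [extLen] at hpart htotal hkey ⊢
  omega

theorem bcomp_bcomp (x : Fin n → Bool) : bcomp (bcomp x) = x := by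
  funext t
  simp [bcomp]

theorem brev_brev (x : Fin n → Bool) : brev (brev x) = x := by
  funext t
  simp [brev]

theorem lexUp_iff_bcomp (hk : k ≤ n - 1) (hi : i ≤ max k (n - k - 1)) :
    lexUp n k i x y ↔ lexUp n (n - k - 1) (max k (n - k - 1) - i) (bcomp y) (bcomp x) := by
  refine ⟨lexUp.bcomp, fun h => ?_⟩
  have h' := h.bcomp
  rwa [bcomp_bcomp, bcomp_bcomp, show n - (n - k - 1) - 1 = k by omega,
    show max (n - k - 1) k - (max k (n - k - 1) - i) = i by omega] at h'

theorem lexUp_iff_brev (hi : i ≤ max k (n - k - 1)) :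
    lexUp n k i x y ↔ lexUp n k (max k (n - k - 1) - i) (brev x) (brev y) := by
  refine ⟨lexUp.brev, fun h => ?_⟩
  have h' := h.brev
  rwa [brev_brev, brev_brev, Nat.sub_sub_self hi] at h'

end LexicalMatching

theorem lexical_matching_symmetries_general (n k i : ℕ) (hk : k ≤ n - 1)
    (hi : i ≤ max k (n - k - 1)) :
    (∀ x y : Fin n → Bool,
      lexUp n k i x y ↔ lexUp n (n - k - 1) (max k (n - k - 1) - i) (bcomp y) (bcomp x)) ∧
    (∀ x y : Fin n → Bool,
      lexUp n k i x y ↔ lexUp n k (max k (n - k - 1) - i) (brev x) (brev y)) ∧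
    (∀ x y : Fin n → Bool,
      lexUp n k i x y ↔ lexUp n (n - k - 1) i (brev (bcomp y)) (brev (bcomp x))) := by
  have hl : max (n - k - 1) (n - (n - k - 1) - 1) = max k (n - k - 1) := by omega
  refine ⟨fun x y => lexUp_iff_bcomp hk hi, fun x y => lexUp_iff_brev hi, fun x y => ?_⟩
  rw [lexUp_iff_bcomp hk hi, lexUp_iff_brev (by omega), hl, Nat.sub_sub_self hi]

/-- For `0 ≤ k ≤ n−1`, `l := max{k, n−k−1}` and `0 ≤ i ≤ l`: complementing both endpoints of
every edge of `M^i_{n,k}` yields exactly `M^{l−i}_{n,n−k−1}` (the complement of the lower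
endpoint becoming the upper endpoint), reversing both endpoints yields exactly `M^{l−i}_{n,k}`,
and complementing-then-reversing yields exactly `M^i_{n,n−k−1}`. -/
theorem lexical_matching_symmetries (n k i : ℕ) (hn : 1 ≤ n) (hk : k ≤ n - 1)
    (hi : i ≤ max k (n - k - 1)) :
    (∀ x y : Fin n → Bool,
      lexUp n k i x y ↔ lexUp n (n - k - 1) (max k (n - k - 1) - i) (bcomp y) (bcomp x)) ∧
    (∀ x y : Fin n → Bool,
      lexUp n k i x y ↔ lexUp n k (max k (n - k - 1) - i) (brev x) (brev y)) ∧
    (∀ x y : Fin n → Bool,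
      lexUp n k i x y ↔ lexUp n (n - k - 1) i (brev (bcomp y)) (brev (bcomp x))) :=
  lexical_matching_symmetries_general n k i hk hi
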